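/- arXiv:1006.0361 — 7 statements merged into one kernel-verified Lean document; each statement's English description precedes it below -/
import Mathlib

section
/- Let x, y, u, v ∈ ℂ⁴ be such that ω₀(a,b) = 0 for all a, b ∈ {x, y, u, v} and Im Ω₀(x,y,u,v) = 0 (i.e. the vectors span a special Lagrangian 4-plane). Then τⱼ(x,y,u,v) = 0 for all j = 1, …, 7, where τ₁ = Im Ω₀ and, for k = 1, 2, 3, τ₂ₖ and τ₂ₖ₊₁ are the real and imaginary parts of the complex 4-form i·σₖ∧ω₀. In other words, a special Lagrangian 4-plane in ℂ⁴ is Cayley in ℝ⁸. -/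
noncomputable section

open Matrix Complex

/-- The Kähler form `ω₀` on `ℂ⁴`: `ω₀(a,b) = Σⱼ Im (conj aⱼ * bⱼ)`. -/
def omega0 (a b : Fin 4 → ℂ) : ℝ := ∑ j, ((starRingEnd ℂ) (a j) * b j).im

/-- `ω₀` viewed as a complex-valued 2-form. -/
def omega0C (a b : Fin 4 → ℂ) : ℂ := (omega0 a b : ℂ)

/-- The holomorphic volume form `Ω₀` on `ℂ⁴`. -/
def Omega0 (v₁ v₂ v₃ v₄ : Fin 4 → ℂ) : ℂ :=
  Matrix.det (Matrix.of fun r c => ![v₁, v₂, v₃, v₄] c r)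

/-- The complex 2-form `dz_j ∧ dz_k`. -/
def dz (j k : Fin 4) (a b : Fin 4 → ℂ) : ℂ := a j * b k - a k * b j

/-- The complex 2-form `dz̄_j ∧ dz̄_k`. -/
def dzbar (j k : Fin 4) (a b : Fin 4 → ℂ) : ℂ :=
  (starRingEnd ℂ) (a j) * (starRingEnd ℂ) (b k) -
  (starRingEnd ℂ) (a k) * (starRingEnd ℂ) (b j)

/-- `σ₁ = dz₁∧dz₂ − dz̄₃∧dz̄₄`. -/
def sigma1 (a b : Fin 4 → ℂ) : ℂ := dz 0 1 a b - dzbar 2 3 a b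

/-- `σ₂ = dz₁∧dz₃ − dz̄₄∧dz̄₂`. -/
def sigma2 (a b : Fin 4 → ℂ) : ℂ := dz 0 2 a b - dzbar 3 1 a b

/-- `σ₃ = dz₁∧dz₄ − dz̄₂∧dz̄₃`. -/
def sigma3 (a b : Fin 4 → ℂ) : ℂ := dz 0 3 a b - dzbar 1 2 a b

/-- The wedge product of two (complex-valued) 2-forms, as a 4-form. -/
def wedge2 (α β : (Fin 4 → ℂ) → (Fin 4 → ℂ) → ℂ) (x y u v : Fin 4 → ℂ) : ℂ :=
  α x y * β u v - α x u * β y v + α x v * β y u +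
  α u v * β x y - α y v * β x u + α y u * β x v

/-- A special Lagrangian 4-plane in `ℂ⁴` is Cayley in `ℝ⁸`: if `ω₀` vanishes on the
span of `x,y,u,v` and `Im Ω₀(x,y,u,v) = 0`, then all seven forms `τ₁,…,τ₇` vanish on
`(x,y,u,v)`, where `τ₁ = Im Ω₀` and `τ₂ₖ + i τ₂ₖ₊₁ = i σₖ ∧ ω₀` for `k = 1,2,3`. -/
theorem specialLagrangian_is_Cayley (x y u v : Fin 4 → ℂ)
    (hω : ∀ a ∈ ({x, y, u, v} : Set (Fin 4 → ℂ)), ∀ b ∈ ({x, y, u, v} : Set (Fin 4 → ℂ)),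
      omega0 a b = 0)
    (hΩ : (Omega0 x y u v).im = 0) :
    (Omega0 x y u v).im = 0 ∧
    (Complex.I * wedge2 sigma1 omega0C x y u v).re = 0 ∧
    (Complex.I * wedge2 sigma1 omega0C x y u v).im = 0 ∧
    (Complex.I * wedge2 sigma2 omega0C x y u v).re = 0 ∧
    (Complex.I * wedge2 sigma2 omega0C x y u v).im = 0 ∧
    (Complex.I * wedge2 sigma3 omega0C x y u v).re = 0 ∧
    (Complex.I * wedge2 sigma3 omega0C x y u v).im = 0 := by
  have h0 : ∀ a ∈ ({x, y, u, v} : Set (Fin 4 → ℂ)), ∀ b ∈ ({x, y, u, v} : Set (Fin 4 → ℂ)),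
      omega0C a b = 0 := fun a ha b hb => by simp [omega0C, hω a ha b hb]
  have hx : x ∈ ({x, y, u, v} : Set (Fin 4 → ℂ)) := by simp
  have hy : y ∈ ({x, y, u, v} : Set (Fin 4 → ℂ)) := by simp
  have hu : u ∈ ({x, y, u, v} : Set (Fin 4 → ℂ)) := by simp
  have hv : v ∈ ({x, y, u, v} : Set (Fin 4 → ℂ)) := by simp
  have hw : ∀ σ : (Fin 4 → ℂ) → (Fin 4 → ℂ) → ℂ, wedge2 σ omega0C x y u v = 0 := by
    intro σ
    simp [wedge2, h0 x hx y hy, h0 x hx u hu, h0 x hx v hv, h0 u hu v hv,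
      h0 y hy v hv, h0 y hy u hu]
  refine ⟨hΩ, ?_, ?_, ?_, ?_, ?_, ?_⟩ <;> simp [hw]

end
end

section
/- Let z₂, z₃ ∈ ℂ with |z₂|² + |z₃|² = 1. If (|z₂|² − |z₃|²)² + 16|z₂|²|z₃|² − 12 Re(z₂²z₃²) = 7 and Im(z₂²z₃²) = 0, then |z₂| = |z₃| = 1/√2 and z₃ = i·conj(z₂) or z₃ = −i·conj(z₂). -/
/-!
Writing `a = |z₂|²`, `b = |z₃|²` and `w = z₂²z₃²`, one has
`|z₃ - i z̄₂|² · |z₃ + i z̄₂|² = (a + b)² - 2(ab - Re w)`, because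
`|z₃ ∓ i z̄₂|² = a + b ∓ 2 Im(z₂z₃)` and `2 Im(z₂z₃)² = ab - Re w`.
Under `a + b = 1` the quartic hypothesis says exactly `ab - Re w = 1/2`, so the product vanishes
and `z₃ = ± i z̄₂`. Then `|z₂| = |z₃|`, and `a + b = 1` forces both to be `1/√2`.
-/

open Complex ComplexConjugate

theorem normSq_sub_I_mul_conj_mul_normSq_add_I_mul_conj (z₂ z₃ : ℂ) :
    normSq (z₃ - I * conj z₂) * normSq (z₃ + I * conj z₂) =
      (normSq z₂ + normSq z₃) ^ 2 - 2 * (normSq z₂ * normSq z₃ - (z₂ ^ 2 * z₃ ^ 2).re) := by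
  simp only [normSq_apply, sub_re, sub_im, add_re, add_im, mul_re, mul_im, conj_re, conj_im,
    I_re, I_im, pow_two]
  ring

theorem eq_I_mul_conj_or_eq_neg_of_normSq_mul_normSq_eq_zero {z₂ z₃ : ℂ}
    (h : normSq (z₃ - I * conj z₂) * normSq (z₃ + I * conj z₂) = 0) :
    z₃ = I * conj z₂ ∨ z₃ = -(I * conj z₂) := by
  rcases mul_eq_zero.mp h with h | h
  · exact .inl (sub_eq_zero.mp (normSq_eq_zero.mp h))
  · exact .inr (eq_neg_of_add_eq_zero_left (normSq_eq_zero.mp h))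

theorem norm_eq_one_div_sqrt_two_of_two_mul_normSq_eq_one {z : ℂ} (h : 2 * normSq z = 1) :
    ‖z‖ = 1 / Real.sqrt 2 := by
  rw [norm_def, show normSq z = 1 / 2 by linarith, Real.sqrt_div' _ zero_le_two, Real.sqrt_one]

theorem cayley_condition_orbit_z2z3_general (z₂ z₃ : ℂ)
    (h : Complex.normSq z₂ + Complex.normSq z₃ = 1)
    (h1 : (Complex.normSq z₂ - Complex.normSq z₃) ^ 2 +
      16 * Complex.normSq z₂ * Complex.normSq z₃ - 12 * (z₂ ^ 2 * z₃ ^ 2).re = 7) :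
    ‖z₂‖ = 1 / Real.sqrt 2 ∧ ‖z₃‖ = 1 / Real.sqrt 2 ∧
    (z₃ = Complex.I * (starRingEnd ℂ) z₂ ∨ z₃ = -(Complex.I * (starRingEnd ℂ) z₂)) := by
  have hprod : normSq (z₃ - I * conj z₂) * normSq (z₃ + I * conj z₂) = 0 := by
    rw [normSq_sub_I_mul_conj_mul_normSq_add_I_mul_conj]
    linear_combination 7 * (normSq z₂ + normSq z₃ + 1) / 6 * h - h1 / 6
  have hz₃ := eq_I_mul_conj_or_eq_neg_of_normSq_mul_normSq_eq_zero hprod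
  have hnormSq : normSq z₃ = normSq z₂ := by
    rcases hz₃ with rfl | rfl <;> simp
  have hz₂ : ‖z₂‖ = 1 / Real.sqrt 2 :=
    norm_eq_one_div_sqrt_two_of_two_mul_normSq_eq_one (by linarith)
  refine ⟨hz₂, ?_, hz₃⟩
  rw [norm_def, hnormSq, ← norm_def, hz₂]

/-- For `z₂, z₃ ∈ ℂ` with `|z₂|² + |z₃|² = 1`, if
`(|z₂|² − |z₃|²)² + 16|z₂|²|z₃|² − 12 Re(z₂²z₃²) = 7` and `Im(z₂²z₃²) = 0`, then
`|z₂| = |z₃| = 1/√2` and `z₃ = ± i conj(z₂)`. -/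
theorem cayley_condition_orbit_z2z3 (z₂ z₃ : ℂ)
    (h : Complex.normSq z₂ + Complex.normSq z₃ = 1)
    (h1 : (Complex.normSq z₂ - Complex.normSq z₃) ^ 2 +
      16 * Complex.normSq z₂ * Complex.normSq z₃ - 12 * (z₂ ^ 2 * z₃ ^ 2).re = 7)
    (h2 : (z₂ ^ 2 * z₃ ^ 2).im = 0) :
    ‖z₂‖ = 1 / Real.sqrt 2 ∧ ‖z₃‖ = 1 / Real.sqrt 2 ∧
    (z₃ = Complex.I * (starRingEnd ℂ) z₂ ∨ z₃ = -(Complex.I * (starRingEnd ℂ) z₂)) :=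
  cayley_condition_orbit_z2z3_general z₂ z₃ h h1
end

section
/- There do not exist z₁, z₄ ∈ ℂ with (z₁, z₄) ≠ (0, 0) and a real number μ > √3 such that Im(z₁z₄) = 0 and z₁² + conj(z₄)² = √3·μ·(conj(z₁)² + z₄²). -/
noncomputable section

open Complex

/-- There do not exist `z₁, z₄ ∈ ℂ` with `(z₁,z₄) ≠ (0,0)` and a real `μ > √3` such
that `Im(z₁z₄) = 0` and `z₁² + conj(z₄)² = √3 μ (conj(z₁)² + z₄²)`. -/
theorem no_distinct_lambda_orbits :
    ¬ ∃ (z₁ z₄ : ℂ) (μ : ℝ), (z₁, z₄) ≠ (0, 0) ∧ Real.sqrt 3 < μ ∧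
      (z₁ * z₄).im = 0 ∧
      z₁ ^ 2 + ((starRingEnd ℂ) z₄) ^ 2 =
        (Real.sqrt 3 : ℂ) * (μ : ℂ) * (((starRingEnd ℂ) z₁) ^ 2 + z₄ ^ 2) := by
  rintro ⟨z₁, z₄, μ, hne, hμ, him, heq⟩
  set a := z₁.re with ha
  set b := z₁.im with hb
  set c := z₄.re with hc
  set d := z₄.im with hd
  have hs3 : (0:ℝ) < Real.sqrt 3 := Real.sqrt_pos.mpr (by norm_num)
  set k : ℝ := Real.sqrt 3 * μ with hkdef
  have hk3 : (3:ℝ) < k := by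
    have h33 : Real.sqrt 3 * Real.sqrt 3 = 3 := Real.mul_self_sqrt (by norm_num)
    nlinarith [mul_lt_mul_of_pos_left hμ hs3]
  have hre : a^2 - b^2 + (c^2 - d^2) = k * (a^2 - b^2 + (c^2 - d^2)) := by
    have := congrArg Complex.re heq
    simpa [pow_two, Complex.add_re, Complex.mul_re, Complex.mul_im, Complex.conj_re,
      Complex.conj_im, hkdef, mul_comm, mul_left_comm, mul_assoc] using this
  have him' : 2*(a*b) - 2*(c*d) = k * (-(2*(a*b)) + 2*(c*d)) := by
    have := congrArg Complex.im heq
    simp [pow_two, Complex.add_im, Complex.mul_re, Complex.mul_im, Complex.conj_re,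
      Complex.conj_im, hkdef] at this
    ring_nf at this ⊢
    linarith [this]
  have e3 : a^2 + c^2 = b^2 + d^2 := by
    have h1 : (1 - k) * (a^2 - b^2 + (c^2 - d^2)) = 0 := by linarith [hre]
    have h2 : a^2 - b^2 + (c^2 - d^2) = 0 := by
      rcases mul_eq_zero.mp h1 with h | h
      · linarith
      · exact h
    linarith
  have e1 : a*b = c*d := by
    have h1 : (1 + k) * (a*b - c*d) = 0 := by linarith [him']
    have h2 : a*b - c*d = 0 := by
      rcases mul_eq_zero.mp h1 with h | h
      · linarith
      · exact h
    linarith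
  have e2 : a*d = -(b*c) := by
    have : a*d + b*c = 0 := by
      simpa [Complex.mul_im] using him
    linarith
  have hac : a*c*(b^2+d^2) = 0 := by linear_combination (b*c)*e1 + (c*d)*e2
  have hbd : b*d*(a^2+c^2) = 0 := by linear_combination (a*d)*e1 + (c*d)*e2
  have hdiff : (a^2-c^2)*(b^2+d^2) = 0 := by
    linear_combination (a*b+c*d)*e1 + (a*d - b*c)*e2
  have hS3 : (a^2+c^2)^2*(b^2+d^2) = 0 := by
    linear_combination (a^2-c^2)*hdiff + (4*a*c)*hac
  have hcube : (a^2+c^2)^3 = 0 := by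
    linear_combination hS3 + (a^2+c^2)^2 * e3
  have hS : a^2 + c^2 = 0 := by
    exact pow_eq_zero_iff (by norm_num) |>.mp hcube
  have hS' : b^2 + d^2 = 0 := by linarith
  have ha0 : a = 0 := pow_eq_zero_iff two_ne_zero |>.mp
    (le_antisymm (by linarith [sq_nonneg c]) (sq_nonneg a))
  have hc0 : c = 0 := pow_eq_zero_iff two_ne_zero |>.mp
    (le_antisymm (by linarith [sq_nonneg a]) (sq_nonneg c))
  have hb0 : b = 0 := pow_eq_zero_iff two_ne_zero |>.mp
    (le_antisymm (by linarith [sq_nonneg d]) (sq_nonneg b))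
  have hd0 : d = 0 := pow_eq_zero_iff two_ne_zero |>.mp
    (le_antisymm (by linarith [sq_nonneg b]) (sq_nonneg d))
  apply hne
  ext <;> simp [Complex.ext_iff, ← ha, ← hb, ← hc, ← hd, ha0, hb0, hc0, hd0]
end
end

section
/- Let h : {4,5,6,7} × {1,2,3} × {1,2,3} → ℝ, written hᵃⱼₖ, satisfy hᵃⱼₖ = hᵃₖⱼ for all a, j, k, and for each j ∈ {1,2,3} the four relations h⁴₁ⱼ + h⁷₂ⱼ + h⁶₃ⱼ = 0, h⁵₁ⱼ + h⁶₂ⱼ − h⁷₃ⱼ = 0, h⁶₁ⱼ − h⁵₂ⱼ − h⁴₃ⱼ = 0, h⁷₁ⱼ − h⁴₂ⱼ + h⁵₃ⱼ = 0. Then h is trace-free: for every a ∈ {4,5,6,7}, hᵃ₁₁ + hᵃ₂₂ + hᵃ₃₃ = 0. (This is the statement that the symmetry conditions on the second fundamental form of an associative 3-fold in S⁷ imply that associative 3-folds are minimal.) -/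
noncomputable section

/-- The second fundamental form tensor `h = (hᵃⱼₖ)` of an associative 3-fold in `S⁷`,
with the normal index `a ∈ {4,5,6,7}` encoded as `Fin 4` (`0 ↦ 4, 1 ↦ 5, 2 ↦ 6, 3 ↦ 7`)
and tangent indices `j, k ∈ {1,2,3}` encoded as `Fin 3` (`0 ↦ 1, 1 ↦ 2, 2 ↦ 3`).
If `h` is symmetric in `j,k` and satisfies the associativity symmetry relations
`h⁴₁ⱼ + h⁷₂ⱼ + h⁶₃ⱼ = 0`, `h⁵₁ⱼ + h⁶₂ⱼ − h⁷₃ⱼ = 0`, `h⁶₁ⱼ − h⁵₂ⱼ − h⁴₃ⱼ = 0`,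
`h⁷₁ⱼ − h⁴₂ⱼ + h⁵₃ⱼ = 0` for every `j`, then `h` is trace-free; i.e. associative
3-folds in `S⁷` are minimal. -/
theorem associative_symmetries_imply_traceFree
    (h : Fin 4 → Fin 3 → Fin 3 → ℝ)
    (hsym : ∀ (a : Fin 4) (j k : Fin 3), h a j k = h a k j)
    (hrel1 : ∀ j : Fin 3, h 0 0 j + h 3 1 j + h 2 2 j = 0)
    (hrel2 : ∀ j : Fin 3, h 1 0 j + h 2 1 j - h 3 2 j = 0)
    (hrel3 : ∀ j : Fin 3, h 2 0 j - h 1 1 j - h 0 2 j = 0)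
    (hrel4 : ∀ j : Fin 3, h 3 0 j - h 0 1 j + h 1 2 j = 0) :
    ∀ a : Fin 4, h a 0 0 + h a 1 1 + h a 2 2 = 0 := by
  have s := fun a j k => hsym a j k
  have r1_0 := hrel1 0; have r1_1 := hrel1 1; have r1_2 := hrel1 2
  have r2_0 := hrel2 0; have r2_1 := hrel2 1; have r2_2 := hrel2 2
  have r3_0 := hrel3 0; have r3_1 := hrel3 1; have r3_2 := hrel3 2
  have r4_0 := hrel4 0; have r4_1 := hrel4 1; have r4_2 := hrel4 2
  have sy := fun a j k => hsym a j k
  have t0 : h 0 0 0 + h 0 1 1 + h 0 2 2 = 0 := by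
    linarith [hrel1 0, hrel4 1, hrel3 2, hsym 3 0 1, hsym 2 0 2, hsym 1 1 2]
  have t1 : h 1 0 0 + h 1 1 1 + h 1 2 2 = 0 := by
    linarith [hrel2 0, hrel3 1, hrel4 2, hsym 2 0 1, hsym 3 0 2, hsym 0 1 2]
  have t2 : h 2 0 0 + h 2 1 1 + h 2 2 2 = 0 := by
    linarith [hrel3 0, hrel2 1, hrel1 2, hsym 1 0 1, hsym 0 0 2, hsym 3 1 2]
  have t3 : h 3 0 0 + h 3 1 1 + h 3 2 2 = 0 := by
    linarith [hrel4 0, hrel1 1, hrel2 2, hsym 0 0 1, hsym 1 0 2, hsym 2 1 2]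
  intro a
  fin_cases a
  · exact t0
  · exact t1
  · exact t2
  · exact t3

end
end

section
/- Let h : {4,5,6,7} × {1,2,3} × {1,2,3} → ℝ, written hᵃⱼₖ, satisfy: hᵃⱼₖ = hᵃₖⱼ for all a, j, k; for each j ∈ {1,2,3} the relations h⁴₁ⱼ + h⁷₂ⱼ + h⁶₃ⱼ = 0, h⁵₁ⱼ + h⁶₂ⱼ − h⁷₃ⱼ = 0, h⁶₁ⱼ − h⁵₂ⱼ − h⁴₃ⱼ = 0, h⁷₁ⱼ − h⁴₂ⱼ + h⁵₃ⱼ = 0; and the normalizations h⁴₁₃ = h⁴₂₃ = 0, h⁵₃₃ = h⁶₃₃ = h⁷₃₃ = 0, and h⁵₂₃ + h⁶₁₃ = 0. Then, setting r = h⁶₁₃, s = −h⁷₁₂, t = (h⁴₁₂ + h⁷₁₁)/2, u = h⁵₁₂, v = −h⁶₁₂, w = h⁵₁₃/2, all components of h are determined: h⁴₁₁ = −(r−s), h⁴₂₂ = −(r+s), h⁴₃₃ = 2r, h⁴₁₂ = t+w; h⁵₁₁ = v, h⁵₂₂ = −v, h⁵₁₂ = u, h⁵₁₃ = 2w, h⁵₂₃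 = −r; h⁶₁₁ = u, h⁶₂₂ = −u, h⁶₁₂ = −v, h⁶₁₃ = r, h⁶₂₃ = −2w; h⁷₁₁ = t−w, h⁷₂₂ = −(t−w), h⁷₁₂ = −s, h⁷₁₃ = h⁷₂₃ = 0. -/
noncomputable section

/-- Normal form of the second fundamental form of an associative 3-fold in `S⁷`.
The tensor `h = (hᵃⱼₖ)` has normal index `a ∈ {4,5,6,7}` encoded as `Fin 4`
(`0 ↦ 4, 1 ↦ 5, 2 ↦ 6, 3 ↦ 7`) and tangent indices `j, k ∈ {1,2,3}` encoded as `Fin 3`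
(`0 ↦ 1, 1 ↦ 2, 2 ↦ 3`).  Assume `h` is symmetric in `j,k`, satisfies the
associativity relations, and the frame-adaptation normalizations
`h⁴₁₃ = h⁴₂₃ = 0`, `h⁵₃₃ = h⁶₃₃ = h⁷₃₃ = 0`, `h⁵₂₃ + h⁶₁₃ = 0`.
Then, setting `r = h⁶₁₃`, `s = −h⁷₁₂`, `t = (h⁴₁₂ + h⁷₁₁)/2`, `u = h⁵₁₂`,
`v = −h⁶₁₂`, `w = h⁵₁₃/2`, all components of `h` are determined. -/
theorem secondFundamentalForm_normal_form
    (h : Fin 4 → Fin 3 → Fin 3 → ℝ)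
    (hsym : ∀ (a : Fin 4) (j k : Fin 3), h a j k = h a k j)
    (hrel1 : ∀ j : Fin 3, h 0 0 j + h 3 1 j + h 2 2 j = 0)
    (hrel2 : ∀ j : Fin 3, h 1 0 j + h 2 1 j - h 3 2 j = 0)
    (hrel3 : ∀ j : Fin 3, h 2 0 j - h 1 1 j - h 0 2 j = 0)
    (hrel4 : ∀ j : Fin 3, h 3 0 j - h 0 1 j + h 1 2 j = 0)
    (hn1 : h 0 0 2 = 0) (hn2 : h 0 1 2 = 0)
    (hn3 : h 1 2 2 = 0) (hn4 : h 2 2 2 = 0) (hn5 : h 3 2 2 = 0)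
    (hn6 : h 1 1 2 + h 2 0 2 = 0)
    (r s t u v w : ℝ)
    (hr : r = h 2 0 2) (hs : s = -h 3 0 1) (ht : t = (h 0 0 1 + h 3 0 0) / 2)
    (hu : u = h 1 0 1) (hv : v = -h 2 0 1) (hw : w = h 1 0 2 / 2) :
    h 0 0 0 = -(r - s) ∧ h 0 1 1 = -(r + s) ∧ h 0 2 2 = 2 * r ∧ h 0 0 1 = t + w ∧
    h 1 0 0 = v ∧ h 1 1 1 = -v ∧ h 1 0 1 = u ∧ h 1 0 2 = 2 * w ∧ h 1 1 2 = -r ∧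
    h 2 0 0 = u ∧ h 2 1 1 = -u ∧ h 2 0 1 = -v ∧ h 2 0 2 = r ∧ h 2 1 2 = -2 * w ∧
    h 3 0 0 = t - w ∧ h 3 1 1 = -(t - w) ∧ h 3 0 1 = -s ∧ h 3 0 2 = 0 ∧
    h 3 1 2 = 0 := by

  have r10 := hrel1 0; have r11 := hrel1 1; have r12 := hrel1 2
  have r20 := hrel2 0; have r21 := hrel2 1; have r22 := hrel2 2
  have r30 := hrel3 0; have r31 := hrel3 1; have r32 := hrel3 2
  have r40 := hrel4 0; have r41 := hrel4 1; have r42 := hrel4 2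
  have s001 := hsym 0 0 1; have s002 := hsym 0 0 2; have s012 := hsym 0 1 2
  have s101 := hsym 1 0 1; have s102 := hsym 1 0 2; have s112 := hsym 1 1 2
  have s201 := hsym 2 0 1; have s202 := hsym 2 0 2; have s212 := hsym 2 1 2
  have s301 := hsym 3 0 1; have s302 := hsym 3 0 2; have s312 := hsym 3 1 2
  refine ⟨?_,?_,?_,?_,?_,?_,?_,?_,?_,?_,?_,?_,?_,?_,?_,?_,?_,?_,?_⟩ <;> linarith


end
end

section
/- Let r, s, t, u, v, w, ρ ∈ ℝ with ρ > 0 and r ≥ 0, and suppose that r(3r+2s) + 4w² = ρ², r(3r−2s) + 4w² = ρ², 2s² + 2t² + 2u² + 2v² + 2w² − r² = ρ², u·w = 0, v·w = 0, and r(t+3w) = 0. Then exactly one of the following holds: (i) r = 0, u = v = 0, 4w² = ρ², and s² + t² = w²; (ii) r > 0, s = 0, w = 0, t = 0, 3r² = ρ², and u² + v² = 2r²; (iii) r > 0, s = 0, u = v = 0, t = −3w, r² = 4w², and ρ² = 4r². -/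
noncomputable section

/-- Classification of the solutions of the Gauss equation for a constant-curvature
associative 3-fold in `S⁷`, in terms of the six parameters `r,s,t,u,v,w` of the normal
form of the second fundamental form: exactly one of the three cases (i), (ii), (iii)
holds. -/
theorem constant_curvature_gauss_trichotomy
    (r s t u v w ρ : ℝ) (hρ : 0 < ρ) (hr : 0 ≤ r)
    (e1 : r * (3 * r + 2 * s) + 4 * w ^ 2 = ρ ^ 2)
    (e2 : r * (3 * r - 2 * s) + 4 * w ^ 2 = ρ ^ 2)
    (e3 : 2 * s ^ 2 + 2 * t ^ 2 + 2 * u ^ 2 + 2 * v ^ 2 + 2 * w ^ 2 - r ^ 2 = ρ ^ 2)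
    (e4 : u * w = 0) (e5 : v * w = 0) (e6 : r * (t + 3 * w) = 0) :
    ((r = 0 ∧ u = 0 ∧ v = 0 ∧ 4 * w ^ 2 = ρ ^ 2 ∧ s ^ 2 + t ^ 2 = w ^ 2) ∨
     (0 < r ∧ s = 0 ∧ w = 0 ∧ t = 0 ∧ 3 * r ^ 2 = ρ ^ 2 ∧ u ^ 2 + v ^ 2 = 2 * r ^ 2) ∨
     (0 < r ∧ s = 0 ∧ u = 0 ∧ v = 0 ∧ t = -3 * w ∧ r ^ 2 = 4 * w ^ 2 ∧
       ρ ^ 2 = 4 * r ^ 2)) ∧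
    ¬ ((r = 0 ∧ u = 0 ∧ v = 0 ∧ 4 * w ^ 2 = ρ ^ 2 ∧ s ^ 2 + t ^ 2 = w ^ 2) ∧
       (0 < r ∧ s = 0 ∧ w = 0 ∧ t = 0 ∧ 3 * r ^ 2 = ρ ^ 2 ∧
         u ^ 2 + v ^ 2 = 2 * r ^ 2)) ∧
    ¬ ((r = 0 ∧ u = 0 ∧ v = 0 ∧ 4 * w ^ 2 = ρ ^ 2 ∧ s ^ 2 + t ^ 2 = w ^ 2) ∧
       (0 < r ∧ s = 0 ∧ u = 0 ∧ v = 0 ∧ t = -3 * w ∧ r ^ 2 = 4 * w ^ 2 ∧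
         ρ ^ 2 = 4 * r ^ 2)) ∧
    ¬ ((0 < r ∧ s = 0 ∧ w = 0 ∧ t = 0 ∧ 3 * r ^ 2 = ρ ^ 2 ∧
         u ^ 2 + v ^ 2 = 2 * r ^ 2) ∧
       (0 < r ∧ s = 0 ∧ u = 0 ∧ v = 0 ∧ t = -3 * w ∧ r ^ 2 = 4 * w ^ 2 ∧
         ρ ^ 2 = 4 * r ^ 2)) := by
  refine ⟨?_, ?_, ?_, ?_⟩
  · -- trichotomy
    have hrs : r * s = 0 := by nlinarith [e1, e2]
    rcases eq_or_lt_of_le hr with hr0 | hrpos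
    · -- r = 0
      have hr0 : r = 0 := hr0.symm
      subst hr0
      have hw2 : 4 * w ^ 2 = ρ ^ 2 := by linarith [e1]
      have hw : w ≠ 0 := by
        intro h
        rw [h] at hw2
        nlinarith [hρ.le, sq_nonneg ρ]
      have hu : u = 0 := by
        rcases mul_eq_zero.mp e4 with h | h
        · exact h
        · exact absurd h hw
      have hv : v = 0 := by
        rcases mul_eq_zero.mp e5 with h | h
        · exact h
        · exact absurd h hw
      left
      refine ⟨rfl, hu, hv, hw2, ?_⟩
      subst hu; subst hv
      nlinarith [e3, hw2]
    · -- r > 0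
      have hs : s = 0 := by
        rcases mul_eq_zero.mp hrs with h | h
        · exact absurd h (ne_of_gt hrpos)
        · exact h
      have ht : t = -3 * w := by
        have := mul_eq_zero.mp e6
        rcases this with h | h
        · exact absurd h (ne_of_gt hrpos)
        · linarith
      by_cases hw : w = 0
      · -- case (ii)
        right; left
        subst hw; subst hs
        have ht0 : t = 0 := by rw [ht]; ring
        subst ht0
        refine ⟨hrpos, rfl, rfl, rfl, by linarith [e1], by nlinarith [e1, e3]⟩
      · -- case (iii)
        right; right
        have hu : u = 0 := by
          rcases mul_eq_zero.mp e4 with h | h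
          · exact h
          · exact absurd h hw
        have hv : v = 0 := by
          rcases mul_eq_zero.mp e5 with h | h
          · exact h
          · exact absurd h hw
        subst hs; subst hu; subst hv
        rw [ht] at e3
        have hrw : r ^ 2 = 4 * w ^ 2 := by nlinarith [e1, e3]
        exact ⟨hrpos, rfl, rfl, rfl, ht, hrw, by nlinarith [e1, hrw]⟩
  · rintro ⟨⟨h0, _⟩, ⟨hp, _⟩⟩; exact absurd h0 hp.ne'
  · rintro ⟨⟨h0, _⟩, ⟨hp, _⟩⟩; exact absurd h0 hp.ne'
  · rintro ⟨⟨hp, _, hw0, _⟩, ⟨_, _, _, _, _, hrw, _⟩⟩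
    rw [hw0] at hrw
    nlinarith [hp]

end
end

section
/- Let r, s, t, u, v, w ∈ ℝ satisfy −3r² − 4tw = 0, r² + 2s² + 2t² − 2u² − 2v² − 6w² = 0, 4tu + 4sv = 0, −4su + 4tv = 0, 4uw = 0, 4vw = 0, −4(2r−s)w = 0, and −4(2r+s)w = 0. Then r = s = t = u = v = w = 0. (Hence an associative 3-fold in S⁷ whose curvature tensor R⁻ vanishes identically is totally geodesic.) -/
noncomputable section

/-- If all components of the curvature tensor `R⁻` of an associative 3-fold in `S⁷`
vanish, expressed in the six parameters `r,s,t,u,v,w` of the normal form of the second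
fundamental form, then all six parameters vanish; hence an associative 3-fold in `S⁷`
with `R⁻ ≡ 0` is totally geodesic. -/
theorem Rminus_zero_implies_totally_geodesic
    (r s t u v w : ℝ)
    (e1 : -3 * r ^ 2 - 4 * t * w = 0)
    (e2 : r ^ 2 + 2 * s ^ 2 + 2 * t ^ 2 - 2 * u ^ 2 - 2 * v ^ 2 - 6 * w ^ 2 = 0)
    (e3 : 4 * t * u + 4 * s * v = 0)
    (e4 : -4 * s * u + 4 * t * v = 0)
    (e5 : 4 * u * w = 0)
    (e6 : 4 * v * w = 0)
    (e7 : -4 * (2 * r - s) * w = 0)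
    (e8 : -4 * (2 * r + s) * w = 0) :
    r = 0 ∧ s = 0 ∧ t = 0 ∧ u = 0 ∧ v = 0 ∧ w = 0 := by
  rcases eq_or_ne w 0 with hw | hw
  · subst hw
    have hr : r = 0 := by nlinarith [sq_nonneg r]
    -- from e3, e4: (s^2+t^2)*(u^2+v^2) = 0 style; use nlinarith on e2
    have key : u ^ 2 + v ^ 2 = s ^ 2 + t ^ 2 := by nlinarith
    have h2 : (s ^ 2 + t ^ 2) * (u ^ 2 + v ^ 2) = 0 := by nlinarith [sq_nonneg (t*u + s*v), sq_nonneg (t*v - s*u)]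
    have hst : s ^ 2 + t ^ 2 = 0 := by
      rcases mul_eq_zero.mp h2 with h | h
      · exact h
      · linarith
    have huv : u ^ 2 + v ^ 2 = 0 := by rw [key, hst]
    have hs : s = 0 := by nlinarith [sq_nonneg s, sq_nonneg t]
    have ht : t = 0 := by nlinarith [sq_nonneg s, sq_nonneg t]
    have hu : u = 0 := by nlinarith [sq_nonneg u, sq_nonneg v]
    have hv : v = 0 := by nlinarith [sq_nonneg u, sq_nonneg v]
    exact ⟨hr, hs, ht, hu, hv, rfl⟩
  · have hu : u = 0 := by
      have := mul_eq_zero.mp e5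
      rcases this with h | h
      · rcases mul_eq_zero.mp h with h' | h'
        · norm_num at h'
        · exact h'
      · exact absurd h hw
    have hv : v = 0 := by
      rcases mul_eq_zero.mp e6 with h | h
      · rcases mul_eq_zero.mp h with h' | h'
        · norm_num at h'
        · exact h'
      · exact absurd h hw
    have hr : r = 0 := by
      have h : (16 * r) * w = 0 := by nlinarith
      rcases mul_eq_zero.mp h with h' | h'
      · linarith [mul_eq_zero.mp (show (16:ℝ) * r = 0 from h')]
      · exact absurd h' hw
    have hs : s = 0 := by
      have h : (8 * s) * w = 0 := by nlinarith
      rcases mul_eq_zero.mp h with h' | h'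
      · rcases mul_eq_zero.mp h' with h'' | h''
        · norm_num at h''
        · exact h''
      · exact absurd h' hw
    have ht : t = 0 := by
      have h : t * w = 0 := by nlinarith
      rcases mul_eq_zero.mp h with h' | h'
      · exact h'
      · exact absurd h' hw
    exfalso
    have : w ^ 2 = 0 := by nlinarith
    exact hw (pow_eq_zero_iff (by norm_num)|>.mp this)

end
end
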